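/- arXiv:1209.6621 — 10 statements merged into one kernel-verified Lean document; each statement's English description precedes it below -/
import Mathlib

section
/- For every integer k ≥ 0, ∑_{(a,b)} ( [a+1]·[b+1]·[a+b+2] / [2] )² = 3(k+3)² / ( 2⁶ · sin⁴(π/(k+3)) · sin²(2π/(k+3)) ), where the sum runs over all pairs of natural numbers (a,b) with a + b ≤ k and [m] denotes sin(mπ/(k+3))/sin(π/(k+3)). (This is the global dimension of the fusion category A_k(SU(3)).) -/
/-!
Put `n = k + 3` and `θ = π / n`. The squared quantum dimension of `(a, b)` is
`(sin xθ · sin yθ · sin (x + y)θ)² / (sin⁴ θ · sin² 2θ)` with `(x, y) = (a + 1, b + 1)` running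
over the open triangle `x, y ≥ 1`, `x + y < n`. The summand vanishes on the lines `x = 0`,
`y = 0`, `x + y = n` and is invariant under `(x, y) ↦ (n - x, n - y)`, which exchanges the two
open triangles of the square `[0, n)²`; so the triangle sum is half the sum over the square.
On the square, expanding the products of squared sines into cosines leaves, besides constants,
only sums `∑_{j<n} cos (2πmj/n + φ)` with `0 < m < n`, which vanish; the square sum is `3n²/32`.
-/

open Real Finset

/-- The quantum number `[m] = sin(mπ/(k+3))/sin(π/(k+3))` occurring in the
quantum dimensions of the simple objects of `A_k(SU(3))`. -/
noncomputable def qnSU3 (k m : ℕ) : ℝ :=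
  Real.sin ((m : ℝ) * Real.pi / ((k : ℝ) + 3)) / Real.sin (Real.pi / ((k : ℝ) + 3))

theorem sum_range_cos_mul_add_eq_zero {n m : ℕ} (hm : 0 < m) (hmn : m < n) (b : ℝ) :
    ∑ i ∈ range n, cos (2 * π * m / n * i + b) = 0 := by
  have hn : (0 : ℝ) < n := by exact_mod_cast hm.trans hmn
  have hsin : sin (2 * π * m / n / 2) ≠ 0 := by
    refine (sin_pos_of_pos_of_lt_pi (by positivity) ?_).ne'
    rw [div_div, div_lt_iff₀ (by positivity)]
    have : (m : ℝ) < n := by exact_mod_cast hmn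
    nlinarith [pi_pos]
  have h := sin_mul_sum_cos n (2 * π * m / n) b
  rw [show (n : ℝ) * (2 * π * m / n) / 2 = m * π by field_simp, sin_nat_mul_pi, zero_mul] at h
  exact (mul_eq_zero.1 h).resolve_left hsin

theorem sin_sq_mul_sin_sq (u v : ℝ) :
    sin u ^ 2 * sin v ^ 2 =
      (2 - 2 * cos (2 * u) - 2 * cos (2 * v) + cos (2 * v - 2 * u) + cos (2 * u + 2 * v)) / 8 := by
  rw [cos_sub, cos_add, cos_two_mul, cos_two_mul, sin_two_mul, sin_two_mul]
  nlinarith [sin_sq_add_cos_sq u, sin_sq_add_cos_sq v]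

theorem sin_sq_mul_two_add_cos_two_mul (u : ℝ) :
    sin u ^ 2 * (2 + cos (2 * u)) = (3 - 2 * cos (2 * u) - cos (2 * (2 * u))) / 4 := by
  rw [cos_two_mul (2 * u), cos_two_mul]
  nlinarith [sin_sq_add_cos_sq u]

theorem sum_range_sin_sq_mul_sin_sq_add {n : ℕ} (hn : 3 ≤ n) (x : ℝ) :
    ∑ y ∈ range n, sin (y * π / n) ^ 2 * sin ((x + y) * π / n) ^ 2
      = n * (2 + cos (2 * (x * π / n))) / 8 := by
  -- Each cosine is written in the shape `cos (2π m / n * y + φ)` of the vanishing sums.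
  have hterm : ∀ y : ℕ, sin (y * π / n) ^ 2 * sin ((x + y) * π / n) ^ 2
      = (2 - 2 * cos (2 * π * (1 : ℕ) / n * y + 0)
          - 2 * cos (2 * π * (1 : ℕ) / n * y + 2 * (x * π / n))
          + cos (2 * (x * π / n)) + cos (2 * π * (2 : ℕ) / n * y + 2 * (x * π / n))) / 8 := by
    intro y
    rw [sin_sq_mul_sin_sq]
    push_cast
    ring_nf
  simp only [hterm, ← sum_div, sum_add_distrib, sum_sub_distrib, ← mul_sum, sum_const,
    card_range, nsmul_eq_mul, sum_range_cos_mul_add_eq_zero one_pos (by omega : 1 < n),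
    sum_range_cos_mul_add_eq_zero two_pos (by omega : 2 < n)]
  ring

noncomputable def sinTriple (n x y : ℕ) : ℝ :=
  sin (x * π / n) * sin (y * π / n) * sin ((x + y) * π / n)

theorem sum_range_sum_range_sinTriple_sq {n : ℕ} (hn : 3 ≤ n) :
    ∑ x ∈ range n, ∑ y ∈ range n, sinTriple n x y ^ 2 = 3 * (n : ℝ) ^ 2 / 32 := by
  have hinner : ∀ x : ℕ, ∑ y ∈ range n, sinTriple n x y ^ 2
      = n / 32 * (3 - 2 * cos (2 * π * (1 : ℕ) / n * x + 0)
          - cos (2 * π * (2 : ℕ) / n * x + 0)) := by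
    intro x
    simp_rw [sinTriple, mul_pow, mul_assoc, ← mul_sum, sum_range_sin_sq_mul_sin_sq_add hn]
    rw [show sin (x * π / n) ^ 2 * (n * (2 + cos (2 * (x * π / n))) / 8)
      = n / 8 * (sin (x * π / n) ^ 2 * (2 + cos (2 * (x * π / n)))) by ring,
      sin_sq_mul_two_add_cos_two_mul]
    push_cast
    ring_nf
  simp only [hinner, ← mul_sum, sum_sub_distrib, sum_const, card_range, nsmul_eq_mul,
    sum_range_cos_mul_add_eq_zero one_pos (by omega : 1 < n),
    sum_range_cos_mul_add_eq_zero two_pos (by omega : 2 < n)]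
  ring

theorem sinTriple_zero_left (n y : ℕ) : sinTriple n 0 y = 0 := by
  simp [sinTriple]

theorem sinTriple_zero_right (n x : ℕ) : sinTriple n x 0 = 0 := by
  simp [sinTriple]

theorem sinTriple_of_add_eq {n x y : ℕ} (h : x + y = n) : sinTriple n x y = 0 := by
  rcases Nat.eq_zero_or_pos n with rfl | hn
  · simp [sinTriple]
  have : ((x : ℝ) + y) * π / n = π := by
    rw [← Nat.cast_add, h]; field_simp
  simp [sinTriple, this]

theorem sinTriple_sub_sub {n x y : ℕ} (hx : x ≤ n) (hy : y ≤ n) :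
    sinTriple n (n - x) (n - y) = -sinTriple n x y := by
  rcases Nat.eq_zero_or_pos n with rfl | hn
  · simp [sinTriple]
  have hn' : (n : ℝ) ≠ 0 := by positivity
  have e1 : ((n - x : ℕ) : ℝ) * π / n = π - x * π / n := by
    rw [Nat.cast_sub hx]; field_simp
  have e2 : ((n - y : ℕ) : ℝ) * π / n = π - y * π / n := by
    rw [Nat.cast_sub hy]; field_simp
  have e3 : (((n - x : ℕ) : ℝ) + (n - y : ℕ)) * π / n = 2 * π - (x + y) * π / n := by
    rw [Nat.cast_sub hx, Nat.cast_sub hy]; field_simp; ring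
  rw [sinTriple, sinTriple, e1, e2, e3, sin_pi_sub, sin_pi_sub, sin_two_pi_sub]
  ring

def openTriangle (n : ℕ) : Finset (ℕ × ℕ) :=
  (range n ×ˢ range n).filter fun p => 0 < p.1 ∧ 0 < p.2 ∧ p.1 + p.2 < n

theorem sum_range_sum_range_eq_two_nsmul_sum_openTriangle {M : Type*} [AddCommMonoid M]
    (n : ℕ) (f : ℕ → ℕ → M) (hl : ∀ y, f 0 y = 0) (hr : ∀ x, f x 0 = 0)
    (hdiag : ∀ x y, x + y = n → f x y = 0)
    (hrefl : ∀ x y, x ≤ n → y ≤ n → f (n - x) (n - y) = f x y) :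
    ∑ x ∈ range n, ∑ y ∈ range n, f x y = 2 • ∑ p ∈ openTriangle n, f p.1 p.2 := by
  set upper := (range n ×ˢ range n).filter fun p => n < p.1 + p.2
  have hsub : openTriangle n ∪ upper ⊆ range n ×ˢ range n :=
    union_subset (filter_subset _ _) (filter_subset _ _)
  have hvanish : ∀ p ∈ range n ×ˢ range n, p ∉ openTriangle n ∪ upper → f p.1 p.2 = 0 := by
    rintro ⟨x, y⟩ hp hpT
    simp only [openTriangle, upper, mem_union, mem_filter, hp, true_and, not_or] at hpT
    rcases Nat.eq_zero_or_pos x with rfl | hx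
    · exact hl y
    rcases Nat.eq_zero_or_pos y with rfl | hy
    · exact hr x
    exact hdiag x y (by omega)
  have hdisj : Disjoint (openTriangle n) upper :=
    disjoint_filter_filter' _ _ fun q h1 h2 p hp => by
      have := h1 p hp; have := h2 p hp; simp only at *; omega
  have hupper : ∑ p ∈ upper, f p.1 p.2 = ∑ p ∈ openTriangle n, f p.1 p.2 := by
    refine sum_nbij' (fun p => (n - p.1, n - p.2)) (fun p => (n - p.1, n - p.2))
      ?_ ?_ ?_ ?_ ?_ <;> rintro ⟨x, y⟩ hp <;>
      simp only [openTriangle, upper, mem_filter, mem_product, mem_range] at hp ⊢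
    · omega
    · omega
    · simp only [Prod.mk.injEq]; omega
    · simp only [Prod.mk.injEq]; omega
    · exact (hrefl x y hp.1.1.le hp.1.2.le).symm
  rw [← sum_product', ← sum_subset hsub hvanish, sum_union hdisj, hupper, two_nsmul]

theorem sum_openTriangle_sinTriple_sq {n : ℕ} (hn : 3 ≤ n) :
    ∑ p ∈ openTriangle n, sinTriple n p.1 p.2 ^ 2 = 3 * (n : ℝ) ^ 2 / 64 := by
  have h := sum_range_sum_range_eq_two_nsmul_sum_openTriangle n (fun x y => sinTriple n x y ^ 2)
    (by simp [sinTriple_zero_left]) (by simp [sinTriple_zero_right])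
    (fun x y hxy => by simp [sinTriple_of_add_eq hxy])
    (fun x y hx hy => by simp [sinTriple_sub_sub hx hy])
  rw [sum_range_sum_range_sinTriple_sq hn, two_nsmul] at h
  linarith

theorem sum_filter_add_le_eq_sum_openTriangle {M : Type*} [AddCommMonoid M] (k : ℕ)
    (f : ℕ → ℕ → M) :
    ∑ p ∈ (range (k + 1) ×ˢ range (k + 1)).filter (fun p => p.1 + p.2 ≤ k),
        f (p.1 + 1) (p.2 + 1)
      = ∑ p ∈ openTriangle (k + 3), f p.1 p.2 := by
  refine sum_nbij' (fun p => (p.1 + 1, p.2 + 1)) (fun p => (p.1 - 1, p.2 - 1))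
    ?_ ?_ ?_ ?_ ?_ <;> rintro ⟨a, b⟩ hp <;>
    simp only [openTriangle, mem_filter, mem_product, mem_range] at hp ⊢
  · omega
  · omega
  · simp only [Prod.mk.injEq]; omega
  · simp only [Prod.mk.injEq]; omega

theorem sin_pi_div_nat_add_three_ne_zero (k : ℕ) : sin (π / ((k : ℝ) + 3)) ≠ 0 := by
  refine (sin_pos_of_pos_of_lt_pi (by positivity) ?_).ne'
  rw [div_lt_iff₀ (by positivity)]
  nlinarith [pi_pos, (Nat.cast_nonneg k : (0 : ℝ) ≤ k)]

theorem qnSU3_mul_qnSU3_mul_qnSU3_div_qnSU3_two (k a b : ℕ) :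
    qnSU3 k (a + 1) * qnSU3 k (b + 1) * qnSU3 k (a + b + 2) / qnSU3 k 2
      = sinTriple (k + 3) (a + 1) (b + 1)
          / (sin (π / ((k : ℝ) + 3)) ^ 2 * sin (2 * π / ((k : ℝ) + 3))) := by
  have := sin_pi_div_nat_add_three_ne_zero k
  simp only [qnSU3, sinTriple]
  push_cast
  field_simp
  ring_nf

/-- The global dimension of the fusion category `A_k(SU(3))`: the sum over
dominant weights `(a,b)` with `a + b ≤ k` of the square of the quantum
dimension `[a+1][b+1][a+b+2]/[2]` equals
`3(k+3)² / (2⁶ · sin⁴(π/(k+3)) · sin²(2π/(k+3)))`. -/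
theorem globalDim_Ak_SU3 (k : ℕ) :
    ∑ p ∈ (Finset.range (k + 1) ×ˢ Finset.range (k + 1)).filter
        (fun p => p.1 + p.2 ≤ k),
      (qnSU3 k (p.1 + 1) * qnSU3 k (p.2 + 1) * qnSU3 k (p.1 + p.2 + 2) / qnSU3 k 2) ^ 2
    = 3 * ((k : ℝ) + 3) ^ 2 /
        (2 ^ 6 * Real.sin (π / ((k : ℝ) + 3)) ^ 4 *
          Real.sin (2 * π / ((k : ℝ) + 3)) ^ 2) := by
  simp_rw [qnSU3_mul_qnSU3_mul_qnSU3_div_qnSU3_two, div_pow, ← sum_div]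
  rw [sum_filter_add_le_eq_sum_openTriangle k (fun x y => sinTriple (k + 3) x y ^ 2),
    sum_openTriangle_sinTriple_sq (by omega)]
  push_cast
  ring
end

section
/- Level-rank duality for global dimensions: for all integers N ≥ 1 and k ≥ 1, k · ( N(k+N)^{N−1} / ( 2^{N(N−1)} · ∏_{s=1}^{N−1} sin^{2(N−s)}(πs/(k+N)) ) ) = N · ( k(k+N)^{k−1} / ( 2^{k(k−1)} · ∏_{s=1}^{k−1} sin^{2(k−s)}(πs/(k+N)) ) ). Equivalently, k·|A_k(SU(N))| = N·|A_N(SU(k))|, where |A_k(SU(N))| denotes the displayed closed-form expression for the global dimension of A_k(SU(N)). -/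
/-!
Write `a s = 2 sin (π s / n)` for `n = N + k` (the chord lengths of the regular `n`-gon) and
`P j = a 1 ⋯ a j`. Then `a (n - s) = a s` and `∏_{0<s<n} a s = |∏_{0<s<n} (1 - ζ^s)| = n` for a
primitive `n`-th root of unity `ζ`, so `P j * P (n - 1 - j) = n`. The denominator of
`|A_k(SU(N))|` is `(P 0 ⋯ P (N-1))²`, and splitting `P 0 ⋯ P (n-1)` after `N` factors and after
`k` factors relates the two denominators through powers of `n`.
-/

open Real Finset

section CommMonoid

variable {M : Type*} [CommMonoid M]

theorem prod_Icc_mul_prod_Icc_sub_of_reflect {a : ℕ → M} {n j : ℕ}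
    (ha : ∀ s ≤ n, a (n - s) = a s) (hj : j < n) :
    (∏ s ∈ Icc 1 j, a s) * ∏ s ∈ Icc 1 (n - 1 - j), a s = ∏ s ∈ Icc 1 (n - 1), a s := by
  have hreflect : ∏ s ∈ Icc 1 (n - 1 - j), a s = ∏ s ∈ Ioc j (n - 1), a s :=
    prod_nbij' (n - ·) (n - ·) (by grind) (by grind) (by grind) (by grind)
      (fun s hs => (ha s (by grind)).symm)
  have hIoc (b : ℕ) : Icc 1 b = Ioc 0 b := Icc_add_one_left_eq_Ioc 0 b
  rw [hreflect, hIoc, hIoc, prod_Ioc_consecutive _ j.zero_le (by omega)]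

theorem prod_range_add_mul_prod_range {P : ℕ → M} {c : M} {N k : ℕ}
    (hP : ∀ j < N + k, P j * P (N + k - 1 - j) = c) :
    (∏ j ∈ range (N + k), P j) * ∏ j ∈ range k, P j = (∏ j ∈ range N, P j) * c ^ k := by
  have hpair : ∀ i ∈ range k, P (N + i) * P (k - 1 - i) = c := fun i hi => by
    convert hP (N + i) (by grind) using 3
    omega
  rw [prod_range_add, ← prod_range_reflect P k, mul_assoc, ← prod_mul_distrib, prod_congr rfl hpair,
    prod_const, card_range]

theorem sq_prod_range_mul_pow_eq {P : ℕ → M} {c : M} {N k : ℕ}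
    (hP : ∀ j < N + k, P j * P (N + k - 1 - j) = c) :
    (∏ j ∈ range N, P j) ^ 2 * c ^ k = (∏ j ∈ range k, P j) ^ 2 * c ^ N := by
  have hP' : ∀ j < k + N, P j * P (k + N - 1 - j) = c := by rwa [add_comm k]
  have hNk := prod_range_add_mul_prod_range hP
  have hkN := prod_range_add_mul_prod_range hP'
  rw [add_comm k] at hkN
  calc (∏ j ∈ range N, P j) ^ 2 * c ^ k
      = (∏ j ∈ range N, P j) * ((∏ j ∈ range (N + k), P j) * ∏ j ∈ range k, P j) := by
        rw [hNk, sq, mul_assoc]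
    _ = (∏ j ∈ range k, P j) * ((∏ j ∈ range (N + k), P j) * ∏ j ∈ range N, P j) := by
        ac_rfl
    _ = (∏ j ∈ range k, P j) ^ 2 * c ^ N := by rw [hkN, sq, mul_assoc]

theorem prod_Icc_pow_sub_eq_prod_range (a : ℕ → M) (m : ℕ) :
    ∏ s ∈ Icc 1 (m - 1), a s ^ (m - s) = ∏ j ∈ range m, ∏ s ∈ Icc 1 j, a s := by
  rw [prod_comm' (t' := Icc 1 (m - 1)) (s' := (Ico · m)) (by grind)]
  refine prod_congr rfl fun s _ => ?_
  rw [prod_const, Nat.card_Ico]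

theorem pow_mul_prod_pow_eq_sq (c : M) (f : ℕ → M) (m : ℕ) :
    c ^ (m * (m - 1)) * ∏ s ∈ Icc 1 (m - 1), f s ^ (2 * (m - s)) =
      (∏ j ∈ range m, ∏ s ∈ Icc 1 j, c * f s) ^ 2 := by
  have hc : (∏ s ∈ Icc 1 (m - 1), c ^ (m - s)) ^ 2 = c ^ (m * (m - 1)) := by
    rw [prod_Icc_pow_sub_eq_prod_range (fun _ => c)]
    simp only [prod_const, Nat.card_Icc, Nat.add_sub_cancel]
    rw [prod_pow_eq_pow_sum, ← pow_mul, sum_range_id_mul_two]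
  rw [← prod_Icc_pow_sub_eq_prod_range, ← hc, ← prod_pow, ← prod_pow, ← prod_mul_distrib]
  refine prod_congr rfl fun s _ => ?_
  rw [mul_pow, mul_pow, ← pow_mul, ← pow_mul, mul_comm 2]

end CommMonoid

theorem two_mul_sin_pi_mul_div_pos {n s : ℕ} (hs : 0 < s) (hsn : s < n) :
    0 < 2 * sin (π * s / n) := by
  have hs' : (0 : ℝ) < s := by exact_mod_cast hs
  have hsn' : (s : ℝ) < n := by exact_mod_cast hsn
  have hn' : (0 : ℝ) < n := hs'.trans hsn'
  refine mul_pos two_pos (sin_pos_of_pos_of_lt_pi (by positivity) ?_)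
  rw [div_lt_iff₀ hn']
  exact mul_lt_mul_of_pos_left hsn' pi_pos

theorem two_mul_sin_pi_mul_sub_div {n s : ℕ} (hs : s ≤ n) :
    2 * sin (π * (n - s : ℕ) / n) = 2 * sin (π * s / n) := by
  rcases Nat.eq_zero_or_pos n with rfl | hn
  · simp
  rw [Nat.cast_sub hs, mul_sub, sub_div, mul_div_cancel_right₀ _ (by positivity), sin_pi_sub]

theorem prod_two_mul_sin_pi_mul_div {n : ℕ} (hn : n ≠ 0) :
    ∏ s ∈ Icc 1 (n - 1), 2 * sin (π * s / n) = n := by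
  obtain ⟨m, rfl⟩ := Nat.exists_eq_add_one_of_ne_zero hn
  set μ := Complex.exp (2 * π * Complex.I / (m + 1 : ℕ))
  have hnorm := congrArg norm (Complex.isPrimitiveRoot_exp (m + 1) hn).prod_one_sub_pow_eq_order
  rw [norm_prod, ← Nat.cast_add_one, Complex.norm_natCast, range_eq_Ico,
    prod_Ico_add' (fun s => ‖1 - μ ^ s‖), zero_add, Ico_add_one_right_eq_Icc] at hnorm
  rw [Nat.add_sub_cancel]
  refine (prod_congr rfl fun s hs => ?_).trans hnorm
  have hpos := two_mul_sin_pi_mul_div_pos (n := m + 1) (mem_Icc.1 hs).1 (by grind)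
  have hpow : μ ^ s = Complex.exp (Complex.I * ((2 * (π * s / (m + 1 : ℕ)) : ℝ) : ℂ)) := by
    rw [← Complex.exp_nat_mul]; push_cast; ring_nf
  rw [hpow, norm_sub_rev, Complex.norm_exp_I_mul_ofReal_sub_one, mul_div_cancel_left₀ _ two_ne_zero,
    Real.norm_eq_abs, abs_of_pos hpos]

/-- Level-rank duality for global dimensions of `A_k(SU(N))`:
`k·|A_k(SU(N))| = N·|A_N(SU(k))|`, where `|A_k(SU(N))|` is the closed-form
expression `N(k+N)^{N−1} / (2^{N(N−1)} · ∏_{s=1}^{N−1} sin^{2(N−s)}(πs/(k+N)))`. -/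
theorem levelRankDuality_globalDim (N k : ℕ) (hN : 1 ≤ N) (hk : 1 ≤ k) :
    (k : ℝ) *
      ((N : ℝ) * ((k : ℝ) + N) ^ (N - 1) /
        (2 ^ (N * (N - 1)) *
          ∏ s ∈ Finset.Icc 1 (N - 1),
            Real.sin (π * (s : ℝ) / ((k : ℝ) + N)) ^ (2 * (N - s))))
    = (N : ℝ) *
      ((k : ℝ) * ((k : ℝ) + N) ^ (k - 1) /
        (2 ^ (k * (k - 1)) *
          ∏ s ∈ Finset.Icc 1 (k - 1),
            Real.sin (π * (s : ℝ) / ((k : ℝ) + N)) ^ (2 * (k - s)))) := by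
  set n := N + k
  set P : ℕ → ℝ := fun j => ∏ s ∈ Icc 1 j, 2 * sin (π * s / n)
  have hn : (k : ℝ) + N = n := by push_cast [n]; ring
  have hP : ∀ j < n, P j * P (n - 1 - j) = n := fun j hj => by
    rw [prod_Icc_mul_prod_Icc_sub_of_reflect (fun s => two_mul_sin_pi_mul_sub_div) hj,
      prod_two_mul_sin_pi_mul_div (by omega)]
  have hD (m : ℕ) : 2 ^ (m * (m - 1)) * ∏ s ∈ Icc 1 (m - 1), sin (π * s / n) ^ (2 * (m - s)) =
      (∏ j ∈ range m, P j) ^ 2 :=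
    pow_mul_prod_pow_eq_sq _ _ m
  have hD_ne (m : ℕ) (hm : m ≤ n) : (∏ j ∈ range m, P j) ^ 2 ≠ 0 :=
    pow_ne_zero 2 (prod_pos fun j hj => prod_pos fun s hs =>
      two_mul_sin_pi_mul_div_pos (by grind) (by grind)).ne'
  have hn0 : (n : ℝ) ≠ 0 := by positivity
  have key : (n : ℝ) ^ (N - 1) / (∏ j ∈ range N, P j) ^ 2 =
      (n : ℝ) ^ (k - 1) / (∏ j ∈ range k, P j) ^ 2 := by
    rw [div_eq_div_iff (hD_ne N (by omega)) (hD_ne k (by omega))]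
    refine mul_right_cancel₀ hn0 ?_
    rw [mul_right_comm, pow_sub_one_mul (by omega), mul_right_comm, pow_sub_one_mul (by omega)]
    linear_combination (sq_prod_range_mul_pow_eq hP).symm
  rw [hn, hD, hD, mul_div_assoc, mul_div_assoc, key]
  ring
end

section
/- Classical limit of the global dimension for SU(N): fix an integer N ≥ 2 and set sf(m) = ∏_{s=1}^{m} s!. Then, as k → ∞ along the natural numbers, the ratio ( N(k+N)^{N−1} / ( 2^{N(N−1)} · ∏_{s=1}^{N−1} sin^{2(N−s)}(πs/(k+N)) ) ) ÷ ( N·k^{N²−1} / ( (2π)^{N(N−1)} · sf(N−1)² ) ) tends to 1. In other words, |A_k(SU(N))| ∼ N·k^{N²−1} / ( (2π)^{N(N−1)} · sf(N−1)² ) as k → ∞. -/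
open Real Finset Filter
open scoped Nat

/-!
Writing `sin t = t · sinc t`, the product `∏ sin (π s / x) ^ (2 (N - s))` with `x = k + N` becomes
`(π / x) ^ (N (N - 1)) · sf(N - 1)² · ∏ sinc (π s / x) ^ (2 (N - s))`, because
`∏ s ^ (N - s) = sf(N - 1)` and `∑ 2 (N - s) = N (N - 1)`. Hence `|A_k(SU(N))|` is exactly the
classical asymptotic evaluated at `k + N` instead of `k`, divided by a product of sinc values.
As `k → ∞`, `(k + N) / k → 1` and every `sinc (π s / (k + N)) → sinc 0 = 1`.
-/

namespace Finset

theorem sum_Icc_two_mul_sub (m : ℕ) : ∑ s ∈ Icc 1 m, 2 * (m + 1 - s) = (m + 1) * m := by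
  induction m with
  | zero => simp
  | succ m ih =>
    have shift : ∑ s ∈ Icc 1 m, 2 * (m + 2 - s) = ∑ s ∈ Icc 1 m, (2 * (m + 1 - s) + 2) :=
      sum_congr rfl fun s hs => by grind
    rw [sum_Icc_succ_top (by omega), shift, sum_add_distrib, ih, sum_const, Nat.card_Icc,
      smul_eq_mul]
    grind

theorem prod_Icc_pow_sub_eq_prod_factorial (m : ℕ) :
    ∏ s ∈ Icc 1 m, s ^ (m + 1 - s) = ∏ s ∈ Icc 1 m, s ! := by
  induction m with
  | zero => simp
  | succ m ih =>
    have shift : ∏ s ∈ Icc 1 m, s ^ (m + 2 - s) = (∏ s ∈ Icc 1 m, s ^ (m + 1 - s)) * m ! := by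
      rw [← prod_Ico_id_eq_factorial, ← Ico_add_one_right_eq_Icc, ← prod_mul_distrib]
      exact prod_congr rfl fun s hs => by rw [← pow_succ]; grind
    rw [prod_Icc_succ_top (by omega), prod_Icc_succ_top (by omega), shift, ih,
      Nat.factorial_succ, Nat.add_sub_cancel_left, pow_one]
    ring

end Finset

theorem Real.sin_eq_mul_sinc (t : ℝ) : sin t = t * sinc t := by
  rcases eq_or_ne t 0 with rfl | ht
  · simp
  · rw [sinc_of_ne_zero ht, mul_div_cancel₀ _ ht]

theorem prod_Icc_mul_div_pow (c x : ℝ) (m : ℕ) :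
    ∏ s ∈ Icc 1 m, (c * s / x) ^ (2 * (m + 1 - s)) =
      (c / x) ^ ((m + 1) * m) * ((∏ s ∈ Icc 1 m, s ! : ℕ) : ℝ) ^ 2 := by
  have split : ∀ s ∈ Icc 1 m, (c * s / x) ^ (2 * (m + 1 - s)) =
      (c / x) ^ (2 * (m + 1 - s)) * ((s : ℝ) ^ (m + 1 - s)) ^ 2 := fun s _ => by
    rw [mul_div_right_comm, mul_pow, ← pow_mul, mul_comm (m + 1 - s) 2]
  rw [prod_congr rfl split, prod_mul_distrib, prod_pow_eq_pow_sum, sum_Icc_two_mul_sub, prod_pow,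
    ← prod_Icc_pow_sub_eq_prod_factorial]
  push_cast
  rfl

noncomputable def globalDimSU (N k : ℕ) : ℝ :=
  N * ((k : ℝ) + N) ^ (N - 1) /
    (2 ^ (N * (N - 1)) * ∏ s ∈ Icc 1 (N - 1), sin (π * s / ((k : ℝ) + N)) ^ (2 * (N - s)))

noncomputable def classicalGlobalDimSU (N : ℕ) (x : ℝ) : ℝ :=
  N * x ^ (N ^ 2 - 1) / ((2 * π) ^ (N * (N - 1)) * ((∏ s ∈ Icc 1 (N - 1), s ! : ℕ) : ℝ) ^ 2)

noncomputable def sincCorrection (N k : ℕ) : ℝ :=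
  ∏ s ∈ Icc 1 (N - 1), sinc (π * s / ((k : ℝ) + N)) ^ (2 * (N - s))

theorem globalDimSU_eq (N k : ℕ) :
    globalDimSU N k = classicalGlobalDimSU N (k + N) / sincCorrection N k := by
  rcases N with _ | m
  · simp [globalDimSU, classicalGlobalDimSU]
  have hx : (k : ℝ) + (m + 1 : ℕ) ≠ 0 := by positivity
  have sin_factor : ∏ s ∈ Icc 1 m, sin (π * s / ((k : ℝ) + (m + 1 : ℕ))) ^ (2 * (m + 1 - s)) =
      (π / ((k : ℝ) + (m + 1 : ℕ))) ^ ((m + 1) * m) * ((∏ s ∈ Icc 1 m, s ! : ℕ) : ℝ) ^ 2 *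
        sincCorrection (m + 1) k := by
    simp only [sin_eq_mul_sinc, mul_pow, prod_mul_distrib, prod_Icc_mul_div_pow, sincCorrection,
      Nat.add_sub_cancel]
  have exponent : (m + 1) ^ 2 - 1 = m + (m + 1) * m := Nat.sub_eq_of_eq_add (by ring)
  rw [globalDimSU, classicalGlobalDimSU, Nat.add_sub_cancel, sin_factor, exponent, pow_add,
    mul_pow 2 π, div_pow]
  field_simp

theorem classicalGlobalDimSU_div_natCast {N k : ℕ} (hN : 0 < N) (hk : k ≠ 0) (x : ℝ) :
    classicalGlobalDimSU N x / classicalGlobalDimSU N k = (x / k) ^ (N ^ 2 - 1) := by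
  have hsf : ((∏ s ∈ Icc 1 (N - 1), s ! : ℕ) : ℝ) ≠ 0 := by positivity
  simp only [classicalGlobalDimSU, div_pow]
  field_simp

theorem tendsto_sincCorrection (N : ℕ) : Tendsto (sincCorrection N) atTop (nhds 1) := by
  have sinc_tendsto (s : ℕ) :
      Tendsto (fun k : ℕ => sinc (π * s / ((k : ℝ) + N))) atTop (nhds 1) := by
    rw [← sinc_zero]
    refine (continuous_sinc.tendsto 0).comp (tendsto_const_nhds.div_atTop ?_)
    exact tendsto_atTop_add_const_right _ _ tendsto_natCast_atTop_atTop
  have := tendsto_finsetProd (Icc 1 (N - 1)) fun s _ => (sinc_tendsto s).pow (2 * (N - s))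
  simp only [one_pow, prod_const_one] at this
  exact this

/-- Classical limit of the global dimension of `A_k(SU(N))`: for fixed `N ≥ 2`,
as `k → ∞`, the ratio of `|A_k(SU(N))|` (in its closed form) to
`N·k^{N²−1}/((2π)^{N(N−1)}·sf(N−1)²)`, where `sf(m) = ∏_{s=1}^m s!`,
tends to `1`. -/
theorem globalDim_Ak_SUN_classical_limit (N : ℕ) (hN : 2 ≤ N) :
    Filter.Tendsto
      (fun k : ℕ =>
        ((N : ℝ) * ((k : ℝ) + N) ^ (N - 1) /
          (2 ^ (N * (N - 1)) *
            ∏ s ∈ Finset.Icc 1 (N - 1),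
              Real.sin (π * (s : ℝ) / ((k : ℝ) + N)) ^ (2 * (N - s)))) /
        ((N : ℝ) * (k : ℝ) ^ (N ^ 2 - 1) /
          ((2 * π) ^ (N * (N - 1)) *
            ((∏ s ∈ Finset.Icc 1 (N - 1), Nat.factorial s : ℕ) : ℝ) ^ 2)))
      Filter.atTop (nhds 1) := by
  have hN0 : 0 < N := by omega
  change Tendsto (fun k : ℕ => globalDimSU N k / classicalGlobalDimSU N k) atTop (nhds 1)
  have shift_ratio : Tendsto (fun k : ℕ => ((k + N : ℝ) / k) ^ (N ^ 2 - 1)) atTop (nhds 1) := by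
    simpa using ((tendsto_natCast_div_add_atTop (N : ℝ)).inv₀ one_ne_zero).pow (N ^ 2 - 1)
  have ratio_limit := shift_ratio.div (tendsto_sincCorrection N) one_ne_zero
  rw [div_one] at ratio_limit
  refine ratio_limit.congr' ?_
  filter_upwards [eventually_ne_atTop 0] with k hk
  rw [Pi.div_apply, globalDimSU_eq, div_right_comm, classicalGlobalDimSU_div_natCast hN0 hk]
end

section
/- The classical Weyl denominator of type C_r (r ≥ 1) equals 2^{−r(r−1)} times the product of the factorials of the exponents: ( ∏_{1 ≤ i < j ≤ r} ((2r+2−i−j)/2)·((j−i)/2) ) · ( ∏_{i=1}^{r} (r + 1 − i) ) = (1/2^{r(r−1)}) · ∏_{s=1}^{r} (2s−1)!, as an identity of rational numbers. (The left-hand side is the product over the positive roots α of C_r of ⟨ρ, α⟩: the short roots (ε_i±ε_j)/√2 contribute (2r+2−i−j)/2 and (j−i)/2, and the long roots √2·ε_i contribute r+1−i.) -/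
open Finset
open scoped Nat

/-!
Group the positive roots by their smaller index `i` and put `m = r - i`. The roots
`(ε_i ± ε_j)/√2` with `j = i + 1 + k` contribute `(2m+1-k)/2` and `(k+1)/2`, and `√2 ε_i`
contributes `m + 1`, so this group gives `(2m+1)⋯(m+2) · m! · (m+1) / 4^m = (2m+1)! / 4^m`.
Multiplying over `m = 0, …, r-1` and summing `2m` by Gauss gives the power `2^{r(r-1)}`.
-/

theorem Finset.prod_Icc_one_eq_prod_range {M : Type*} [CommMonoid M] (f : ℕ → M) (n : ℕ) :
    ∏ i ∈ Icc 1 n, f i = ∏ k ∈ range n, f (k + 1) := by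
  rw [← Ico_add_one_right_eq_Icc, prod_Ico_eq_prod_range, Nat.add_sub_cancel]
  simp_rw [add_comm 1]

theorem Finset.prod_Icc_one_reflect {M : Type*} [CommMonoid M] (f : ℕ → M) (n : ℕ) :
    ∏ i ∈ Icc 1 n, f (n - i) = ∏ k ∈ range n, f k := by
  rw [prod_Icc_one_eq_prod_range, ← prod_range_reflect f n]
  refine prod_congr rfl fun k _ => ?_
  rw [Nat.sub_sub, add_comm 1]

theorem Finset.prod_filter_fst_lt_snd_Icc {M : Type*} [CommMonoid M] (n : ℕ) (f : ℕ × ℕ → M) :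
    ∏ p ∈ (Icc 1 n ×ˢ Icc 1 n).filter (fun p => p.1 < p.2), f p
      = ∏ i ∈ Icc 1 n, ∏ k ∈ range (n - i), f (i, i + 1 + k) := by
  rw [prod_finset_product _ (Icc 1 n) (fun i => Ico (i + 1) (n + 1))
    (fun p => by simp only [mem_filter, mem_product, mem_Icc, mem_Ico]; omega)]
  refine prod_congr rfl fun i _ => ?_
  rw [prod_Ico_eq_prod_range, Nat.add_sub_add_right]

theorem Nat.prod_range_sub_mul_succ_mul_succ_eq_factorial (m : ℕ) :
    (∏ k ∈ range m, (2 * m + 1 - k) * (k + 1)) * (m + 1) = (2 * m + 1)! := by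
  rw [prod_mul_distrib, ← descFactorial_eq_prod_range, prod_range_add_one_eq_factorial,
    ← factorial_mul_descFactorial (by omega : m ≤ 2 * m + 1),
    show 2 * m + 1 - m = m + 1 by omega, factorial_succ]
  ring

theorem prod_range_halves_mul_succ_eq_factorial_div (m : ℕ) :
    (∏ k ∈ range m, ((2 * m + 1 - k : ℚ) / 2) * ((k + 1 : ℚ) / 2)) * (m + 1)
      = (2 * m + 1)! / 2 ^ (2 * m) := by
  have hterm : ∀ k ∈ range m, ((2 * m + 1 - k : ℚ) / 2) * ((k + 1 : ℚ) / 2)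
      = (((2 * m + 1 - k) * (k + 1) : ℕ) : ℚ) / 4 := by
    intro k hk
    push_cast [Nat.cast_sub (by rw [mem_range] at hk; omega : k ≤ 2 * m + 1)]
    ring
  rw [prod_congr rfl hterm, prod_div_distrib, prod_const, card_range,
    ← Nat.prod_range_sub_mul_succ_mul_succ_eq_factorial, pow_mul]
  push_cast
  ring

theorem prod_range_factorial_div (r : ℕ) :
    ∏ m ∈ range r, ((2 * m + 1)! : ℚ) / 2 ^ (2 * m)
      = 1 / 2 ^ (r * (r - 1)) * ∏ s ∈ Icc 1 r, ((2 * s - 1)! : ℚ) := by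
  rw [prod_div_distrib, prod_pow_eq_pow_sum, ← mul_sum, mul_comm, sum_range_id_mul_two,
    prod_Icc_one_eq_prod_range, one_div_mul_eq_div]
  simp_rw [Nat.mul_succ, Nat.add_succ_sub_one]

theorem weylDenominator_Cr_general (r : ℕ) :
    (∏ p ∈ (Finset.Icc 1 r ×ˢ Finset.Icc 1 r).filter (fun p => p.1 < p.2),
        (((2 * (r : ℚ) + 2 - (p.1 : ℚ) - (p.2 : ℚ)) / 2) * (((p.2 : ℚ) - (p.1 : ℚ)) / 2))) *
      (∏ i ∈ Finset.Icc 1 r, ((r : ℚ) + 1 - (i : ℚ)))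
    = (1 / 2 ^ (r * (r - 1))) * ∏ s ∈ Finset.Icc 1 r, (Nat.factorial (2 * s - 1) : ℚ) := by
  rw [prod_filter_fst_lt_snd_Icc, ← prod_mul_distrib]
  calc _ = ∏ i ∈ Icc 1 r, ((2 * (r - i) + 1)! : ℚ) / 2 ^ (2 * (r - i)) :=
        prod_congr rfl fun i hi => ?_
    _ = ∏ m ∈ range r, ((2 * m + 1)! : ℚ) / 2 ^ (2 * m) :=
        prod_Icc_one_reflect (fun m => ((2 * m + 1)! : ℚ) / 2 ^ (2 * m)) r
    _ = _ := prod_range_factorial_div r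
  obtain ⟨m, rfl⟩ := Nat.exists_eq_add_of_le (mem_Icc.1 hi).2
  rw [Nat.add_sub_cancel_left, ← prod_range_halves_mul_succ_eq_factorial_div]
  push_cast
  congr 1
  · exact prod_congr rfl fun k _ => by ring
  · ring

/-- The classical Weyl denominator of type `C_r` (`r ≥ 1`) equals `2^{−r(r−1)}`
times the product of the factorials of the exponents `1,3,…,2r−1`:
`(∏_{1≤i<j≤r} ((2r+2−i−j)/2)·((j−i)/2)) · (∏_{i=1}^r (r+1−i))
  = (1/2^{r(r−1)})·∏_{s=1}^r (2s−1)!`. -/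
theorem weylDenominator_Cr (r : ℕ) (hr : 1 ≤ r) :
    (∏ p ∈ (Finset.Icc 1 r ×ˢ Finset.Icc 1 r).filter (fun p => p.1 < p.2),
        (((2 * (r : ℚ) + 2 - (p.1 : ℚ) - (p.2 : ℚ)) / 2) * (((p.2 : ℚ) - (p.1 : ℚ)) / 2))) *
      (∏ i ∈ Finset.Icc 1 r, ((r : ℚ) + 1 - (i : ℚ)))
    = (1 / 2 ^ (r * (r - 1))) * ∏ s ∈ Finset.Icc 1 r, (Nat.factorial (2 * s - 1) : ℚ) :=
  weylDenominator_Cr_general r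
end

section
/- Fusion product formula for the Weyl denominator of type A_r: let r ≥ 1, N = r+1, let G be the r×r matrix with G_{ab} = 1 if |a−b| = 1 and G_{ab} = 0 otherwise, and define matrices F_n by F_0 = 0, F_1 = I, F_{n+1} = F_n·G − F_{n−1}. Then ∏_{n=1}^{N} ∏_{b=1}^{r} ( ∑_{a=1}^{r} (F_n + F_{n−1})_{a,b} ) = ( ∏_{s=1}^{r} s! )², i.e. the double product equals the square of the classical Weyl denominator D = sf(r) of A_r. -/
open Finset

/-- Adjacency matrix of the Dynkin diagram `A_r` (path graph on `r` vertices):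
`G_{ab} = 1` if `|a − b| = 1` and `0` otherwise. -/
def pathG (r : ℕ) : Matrix (Fin r) (Fin r) ℤ :=
  Matrix.of fun a b => if (a : ℕ) + 1 = (b : ℕ) ∨ (b : ℕ) + 1 = (a : ℕ) then 1 else 0

/-- The `SU(2)` fusion matrices for `A_r`, defined by the Chebyshev recurrence
`F_0 = 0`, `F_1 = I`, `F_{n+1} = F_n·G − F_{n−1}`. -/
def fusF (r : ℕ) : ℕ → Matrix (Fin r) (Fin r) ℤ
  | 0 => 0
  | 1 => 1
  | n + 2 => fusF r (n + 1) * pathG r - fusF r n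

/-!
The column sums `c_n(b) = ∑ₐ (F_n)_{ab}` obey the recurrence of `F_n`, and `G` acts on row
vectors as `f(b) ↦ f(b-1) + f(b+1)` with zero boundary values. The
solution for `0 ≤ n ≤ N` is the distance `min(n, b, N-n, N-b)` from `(n, b)` to the boundary of
the square `[0, N]²`, so the factor `c_n(b) + c_{n-1}(b)` is `min(2n-1, 2(N-n)+1, 2b, 2(N-b))`.
On the `N × r` grid these values form concentric rings: the outer ring holds `2r` ones and
`2(r-1)` twos, and the inside is the grid for `r - 2` with every value raised by `2`. Peeling off
the rings gives `∏_{j=1}^r j^{2(r+1-j)} = sf(r)²`.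
-/

open Matrix Nat

theorem sum_fin_ite_val_eq {M : Type*} [AddCommMonoid M] (r m : ℕ) (g : ℕ → M) :
    ∑ c : Fin r, (if (c : ℕ) = m then g c else 0) = if m < r then g m else 0 := by
  rw [Fin.sum_univ_eq_sum_range (fun c => if c = m then g c else 0), sum_ite_eq']
  simp only [mem_range]

theorem prod_range_add_two {M : Type*} [CommMonoid M] (f : ℕ → M) (k : ℕ) :
    ∏ i ∈ range (k + 2), f i = f 0 * (∏ i ∈ range k, f (i + 1)) * f (k + 1) := by
  rw [prod_range_succ, prod_range_succ', mul_comm (∏ i ∈ range k, f (i + 1))]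

theorem superFactorial_eq_prod_pow (n : ℕ) : sf n = ∏ j ∈ range n, (j + 1) ^ (n - j) := by
  induction n with
  | zero => rfl
  | succ n ih =>
    have split_pow : ∀ j ∈ range n, (j + 1) ^ (n + 1 - j) = (j + 1) ^ (n - j) * (j + 1) := by
      intro j hj
      rw [mem_range] at hj
      rw [← pow_succ, Nat.sub_add_comm hj.le]
    rw [superFactorial_succ, ih, prod_range_succ (fun j => (j + 1) ^ (n + 1 - j)) n,
      Nat.add_sub_cancel_left, pow_one, prod_congr rfl split_pow, prod_mul_distrib, factorial_succ,
      ← prod_range_add_one_eq_factorial]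
    ring

theorem vecMul_pathG (r : ℕ) (f : ℕ → ℤ) (h0 : f 0 = 0) (hr : f (r + 1) = 0) (b : Fin r) :
    ((fun c : Fin r => f (c + 1)) ᵥ* pathG r) b = f b + f (b + 2) := by
  obtain ⟨b, hb⟩ := b
  have split_adj : ∀ c : Fin r, f (c + 1) * pathG r c ⟨b, hb⟩
      = (if (c : ℕ) + 1 = b then f (c + 1) else 0)
        + (if (c : ℕ) = b + 1 then f (c + 1) else 0) := by
    intro c
    simp only [pathG, of_apply]
    split_ifs <;> omega
  have right : ∑ c : Fin r, (if (c : ℕ) = b + 1 then f (c + 1) else 0) = f (b + 2) := by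
    rw [sum_fin_ite_val_eq r (b + 1) (fun c => f (c + 1))]
    split_ifs with h
    · rfl
    · rw [show b + 2 = r + 1 by omega, hr]
  have left : ∑ c : Fin r, (if (c : ℕ) + 1 = b then f (c + 1) else 0) = f b := by
    cases b with
    | zero => simp [h0]
    | succ b =>
      simp only [Nat.add_right_cancel_iff]
      rw [sum_fin_ite_val_eq r b (fun c => f (c + 1)), if_pos (by omega)]
  simp only [vecMul, dotProduct, split_adj, sum_add_distrib, left, right]

theorem vecMul_fusF_add_two (r n : ℕ) (v : Fin r → ℤ) :
    v ᵥ* fusF r (n + 2) = v ᵥ* fusF r (n + 1) ᵥ* pathG r - v ᵥ* fusF r n := by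
  rw [fusF, vecMul_sub, vecMul_vecMul]

def squareBoundaryDist (N n b : ℕ) : ℕ := min (min n b) (min (N - n) (N - b))

theorem squareBoundaryDist_discreteWave {N n b : ℕ} (hn : n + 2 ≤ N) (hb : b + 2 ≤ N) :
    squareBoundaryDist N (n + 1) b + squareBoundaryDist N (n + 1) (b + 2)
      = squareBoundaryDist N (n + 2) (b + 1) + squareBoundaryDist N n (b + 1) := by
  simp only [squareBoundaryDist]
  omega

theorem one_vecMul_fusF (r n : ℕ) (hn : n ≤ r + 1) :
    (1 : Fin r → ℤ) ᵥ* fusF r n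
      = fun b : Fin r => (squareBoundaryDist (r + 1) n (b + 1) : ℤ) := by
  induction n using Nat.twoStepInduction with
  | zero => funext b; simp [fusF, squareBoundaryDist]
  | one =>
    funext b
    simp only [fusF, vecMul_one, Pi.one_apply, squareBoundaryDist]
    omega
  | more n ih₀ ih₁ =>
    funext b
    have pathG_action := vecMul_pathG r (fun k => (squareBoundaryDist (r + 1) (n + 1) k : ℤ))
      (by simp [squareBoundaryDist]) (by simp [squareBoundaryDist]) b
    rw [vecMul_fusF_add_two, ih₁ (by omega), ih₀ (by omega), Pi.sub_apply, pathG_action]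
    have := squareBoundaryDist_discreteWave hn (show (b : ℕ) + 2 ≤ r + 1 by omega)
    omega

-- The column sum of `F_{i+1} + F_i` at column `b + 1`, with 0-based `i` and `b`.
def gridFactor (r i b : ℕ) : ℕ :=
  min (min (2 * i + 1) (2 * (r - i) + 1)) (min (2 * b + 2) (2 * (r - b)))

-- Peeling the outer ring (values `1` and `2`) leaves the grid of `r` raised by `2`, whence `2 * c`.
theorem prod_gridFactor_add (r c : ℕ) :
    ∏ i ∈ range (r + 1), ∏ b ∈ range r, (gridFactor r i b + 2 * c)
      = ∏ j ∈ range r, (j + 1 + 2 * c) ^ (2 * (r - j)) := by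
  induction r using Nat.twoStepInduction generalizing c with
  | zero => simp
  | one => simp [gridFactor, prod_range_succ, sq]
  | more r ih _ =>
    have outer_row : ∀ i ∈ ({0, r + 2} : Finset ℕ),
        ∏ b ∈ range (r + 2), (gridFactor (r + 2) i b + 2 * c) = (1 + 2 * c) ^ (r + 2) := by
      intro i hi
      rw [prod_congr rfl fun b hb => ?_, prod_const, card_range]
      simp only [mem_insert, mem_singleton, mem_range] at hi hb
      simp only [gridFactor]
      omega
    have inner_row : ∀ i ∈ range (r + 1),
        ∏ b ∈ range (r + 2), (gridFactor (r + 2) (i + 1) b + 2 * c)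
          = (2 + 2 * c) ^ 2 * ∏ b ∈ range r, (gridFactor r i b + 2 * (c + 1)) := by
      intro i hi
      rw [prod_range_add_two, prod_congr rfl fun b hb => ?_]
      · rw [mem_range] at hi
        rw [show gridFactor (r + 2) (i + 1) 0 = 2 by simp only [gridFactor]; omega,
          show gridFactor (r + 2) (i + 1) (r + 1) = 2 by simp only [gridFactor]; omega]
        ring
      · rw [mem_range] at hi hb
        simp only [gridFactor]
        omega
    have rhs_peel : ∏ j ∈ range (r + 2), (j + 1 + 2 * c) ^ (2 * (r + 2 - j))
        = (1 + 2 * c) ^ (2 * (r + 2)) * (2 + 2 * c) ^ (2 * (r + 1))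
          * ∏ j ∈ range r, (j + 1 + 2 * (c + 1)) ^ (2 * (r - j)) := by
      rw [prod_range_succ', prod_range_succ', prod_congr rfl fun j hj => ?_]
      · simp only [zero_add, Nat.sub_zero, show r + 2 - 1 = r + 1 by omega]
        ring
      · rw [mem_range] at hj
        rw [show r + 2 - (j + 1 + 1) = r - j by omega]
        ring_nf
    rw [prod_range_add_two, outer_row 0 (by simp), outer_row (r + 2) (by simp),
      prod_congr rfl inner_row, prod_mul_distrib, prod_const, card_range, ← pow_mul, ih (c + 1),
      rhs_peel]
    ring

theorem prod_gridFactor (r : ℕ) :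
    ∏ i ∈ range (r + 1), ∏ b ∈ range r, gridFactor r i b = r.superFactorial ^ 2 := by
  rw [superFactorial_eq_prod_pow, ← prod_pow]
  simpa [← pow_mul, mul_comm] using prod_gridFactor_add r 0

theorem sum_fusF_succ_add_fusF_apply (r i : ℕ) (hi : i ≤ r) (b : Fin r) :
    ∑ a, (fusF r (i + 1) + fusF r i) a b = gridFactor r i b := by
  have col_sum :
      ∀ n ≤ r + 1, ∑ a, fusF r n a b = (squareBoundaryDist (r + 1) n (b + 1) : ℤ) := by
    intro n hn
    simpa [vecMul, dotProduct] using congrFun (one_vecMul_fusF r n hn) b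
  have dist_add : squareBoundaryDist (r + 1) (i + 1) (b + 1) + squareBoundaryDist (r + 1) i (b + 1)
      = gridFactor r i b := by
    simp only [squareBoundaryDist, gridFactor]
    omega
  simp only [Matrix.add_apply, sum_add_distrib, col_sum (i + 1) (by omega), col_sum i (by omega)]
  exact_mod_cast dist_add

theorem fusionProduct_weylDenominator_Ar_general (r : ℕ) :
    ∏ n ∈ Finset.Icc 1 (r + 1), ∏ b : Fin r,
      (∑ a : Fin r, (fusF r n + fusF r (n - 1)) a b)
    = ((∏ s ∈ Finset.Icc 1 r, Nat.factorial s : ℕ) : ℤ) ^ 2 := by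
  rw [Nat.prod_Icc_factorial, ← Nat.cast_pow, ← prod_gridFactor, ← Ico_add_one_right_eq_Icc,
    ← zero_add 1, ← prod_Ico_add', ← range_eq_Ico]
  push_cast
  refine prod_congr rfl fun i hi => ?_
  rw [← Fin.prod_univ_eq_prod_range (fun b => (gridFactor r i b : ℤ))]
  exact prod_congr rfl fun b _ => sum_fusF_succ_add_fusF_apply r i (mem_range_succ_iff.mp hi) b

/-- Fusion product formula for the Weyl denominator of type `A_r`:
with `N = r+1`, `∏_{n=1}^N ∏_{b=1}^r (∑_{a=1}^r (F_n + F_{n−1})_{a,b})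
 = (∏_{s=1}^r s!)²`. -/
theorem fusionProduct_weylDenominator_Ar (r : ℕ) (hr : 1 ≤ r) :
    ∏ n ∈ Finset.Icc 1 (r + 1), ∏ b : Fin r,
      (∑ a : Fin r, (fusF r n + fusF r (n - 1)) a b)
    = ((∏ s ∈ Finset.Icc 1 r, Nat.factorial s : ℕ) : ℤ) ^ 2 :=
  fusionProduct_weylDenominator_Ar_general r
end

section
/- Symmetries of the column sums of SU(2) fusion matrices for A_r: with r ≥ 1, N = r+1, G the r×r adjacency matrix of the path graph, F_0 = 0, F_1 = I, F_{n+1} = F_n·G − F_{n−1}, and λ_{n,b} = ∑_{a=1}^{r} (F_n + F_{n−1})_{a,b}, one has λ_{N−n+1, b} = λ_{n,b} and λ_{n, N−b} = λ_{n,b} for all 1 ≤ n ≤ N and 1 ≤ b ≤ N−1. -/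
/-
For `n ≤ N` the entries of `F_n` have a closed form in `1`-based coordinates (the
reflection-principle solution of the recurrence on the path): `(F_n)_{A,B} = 1` iff
`|A - B| < n < A + B`, `A + B + n < 2N` and `A + B + n` is odd, and `0` otherwise. In this form,
replacing `n` by `N - n` amounts to `A ↦ N - A`. Independently, every `F_n` inherits the symmetry of
`G` under the reversal `a ↦ N - a` of the path. Both identities then follow by reindexing the sum
over `a` by the reversal.
-/

open Finset

def fusionEntry (r n : ℕ) (A B : ℤ) : ℤ :=
  if A - B < n ∧ B - A < n ∧ n < A + B ∧ A + B + n < 2 * ((r : ℤ) + 1) ∧ (A + B + n) % 2 = 1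
  then 1 else 0

lemma fusionEntry_sub (r n : ℕ) (hn : n ≤ r + 1) (A B : ℤ) :
    fusionEntry r (r + 1 - n) A B = fusionEntry r n (r + 1 - A) B := by
  unfold fusionEntry; split_ifs <;> omega

lemma fusionEntry_zero_right (r n : ℕ) (A : ℤ) : fusionEntry r n A 0 = 0 := by
  unfold fusionEntry; split_ifs <;> omega

lemma fusionEntry_succ_right (r n : ℕ) (A : ℤ) : fusionEntry r n A (r + 1) = 0 := by
  unfold fusionEntry; split_ifs <;> omega

lemma fusionEntry_recurrence (r n : ℕ) (hn : n + 1 ≤ r) (A B : ℤ) (hB : 1 ≤ B) (hB' : B ≤ r) :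
    fusionEntry r (n + 2) A B =
      fusionEntry r (n + 1) A (B - 1) + fusionEntry r (n + 1) A (B + 1) - fusionEntry r n A B := by
  unfold fusionEntry; split_ifs <;> omega

lemma pathG_rev_rev_apply {r : ℕ} (a b : Fin r) : pathG r a.rev b.rev = pathG r a b := by
  have := a.isLt; have := b.isLt
  simp only [pathG, Matrix.of_apply, Fin.val_rev]
  split_ifs <;> omega

lemma sum_mul_pathG_apply {r : ℕ} (Y : ℕ → ℤ) (h0 : Y 0 = 0) (hr : Y (r + 1) = 0) (b : Fin r) :
    ∑ c : Fin r, Y (c + 1) * pathG r c b = Y b + Y (b + 2) := by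
  let h : ℕ → ℤ := fun C => (if C = b then Y C else 0) + (if C = b + 2 then Y C else 0)
  calc ∑ c : Fin r, Y (c + 1) * pathG r c b = ∑ c : Fin r, h (c + 1) := by
        refine sum_congr rfl fun c _ => ?_
        simp only [h, pathG, Matrix.of_apply]
        split_ifs <;> omega
    _ = ∑ C ∈ range (r + 2), h C := by
        rw [Fin.sum_univ_eq_sum_range (fun c => h (c + 1)), sum_range_succ, sum_range_succ']
        simp [h, h0, hr]
    _ = Y b + Y (b + 2) := by
        rw [sum_add_distrib, sum_ite_eq', sum_ite_eq', if_pos, if_pos] <;> simp; omega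

lemma fusF_apply (r : ℕ) : ∀ n ≤ r + 1, ∀ a b : Fin r,
    fusF r n a b = fusionEntry r n ((a : ℕ) + 1) ((b : ℕ) + 1)
  | 0, _, a, b => by
    simp only [fusF, Matrix.zero_apply, fusionEntry]; split_ifs <;> omega
  | 1, _, a, b => by
    simp only [fusF, Matrix.one_apply, fusionEntry, ← Fin.val_inj]; split_ifs <;> omega
  | n + 2, hn, a, b => by
    have hb := b.isLt
    have hcol := sum_mul_pathG_apply (fun B => fusionEntry r (n + 1) ((a : ℕ) + 1) B)
      (fusionEntry_zero_right ..) (by exact_mod_cast fusionEntry_succ_right ..) b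
    push_cast at hcol
    simp only [fusF, Matrix.sub_apply, Matrix.mul_apply, fusF_apply r (n + 1) (by omega),
      fusF_apply r n (by omega), hcol]
    rw [fusionEntry_recurrence r n (by omega) _ _ (by omega) (by omega)]
    ring_nf

lemma fusF_rev_rev_apply (r : ℕ) : ∀ n (a b : Fin r), fusF r n a.rev b.rev = fusF r n a b
  | 0, a, b => rfl
  | 1, a, b => by simp [fusF, Matrix.one_apply]
  | n + 2, a, b => by
    simp only [fusF, Matrix.sub_apply, Matrix.mul_apply, fusF_rev_rev_apply r n]
    rw [← Equiv.sum_comp Fin.revPerm]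
    simp [fusF_rev_rev_apply r (n + 1), pathG_rev_rev_apply]

lemma fusF_sub_apply (r n : ℕ) (hn : n ≤ r + 1) (a b : Fin r) :
    fusF r (r + 1 - n) a b = fusF r n a.rev b := by
  rw [fusF_apply r _ (by omega), fusF_apply r n hn, fusionEntry_sub r n hn]
  congr 1
  simp only [Fin.val_rev]
  omega

lemma sum_fusF_sub_apply (r n : ℕ) (hn : n ≤ r + 1) (b : Fin r) :
    ∑ a, fusF r (r + 1 - n) a b = ∑ a, fusF r n a b := by
  simp only [fusF_sub_apply r n hn]
  exact Equiv.sum_comp Fin.revPerm (fun a => fusF r n a b)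

lemma sum_fusF_apply_rev (r n : ℕ) (b : Fin r) : ∑ a, fusF r n a b.rev = ∑ a, fusF r n a b := by
  rw [← Equiv.sum_comp Fin.revPerm]
  simp only [Fin.revPerm_apply, fusF_rev_rev_apply]

/-- A vertex `b : Fin r` has `1`-based index `b + 1`, so the vertex `N − b` has `0`-based index
`r − 1 − b`, i.e. it is `b.rev`. -/
theorem fusion_columnSums_symm_Ar (r : ℕ) (n : ℕ) (hn : 1 ≤ n)
    (hn2 : n ≤ r + 1) (b : Fin r) :
    (∑ a : Fin r, (fusF r ((r + 1) - n + 1) + fusF r ((r + 1) - n + 1 - 1)) a b)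
      = (∑ a : Fin r, (fusF r n + fusF r (n - 1)) a b) ∧
    (∑ a : Fin r, (fusF r n + fusF r (n - 1)) a
        ⟨r - 1 - (b : ℕ), by have := b.isLt; omega⟩)
      = (∑ a : Fin r, (fusF r n + fusF r (n - 1)) a b) := by
  have hrev : (⟨r - 1 - (b : ℕ), by have := b.isLt; omega⟩ : Fin r) = b.rev :=
    Fin.ext (by simp only [Fin.val_rev]; omega)
  simp only [Matrix.add_apply, sum_add_distrib, hrev, sum_fusF_apply_rev, and_true]
  rw [show r + 1 - n + 1 = r + 1 - (n - 1) by omega, show r + 1 - (n - 1) - 1 = r + 1 - n by omega,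
    sum_fusF_sub_apply r (n - 1) (by omega), sum_fusF_sub_apply r n hn2, add_comm]
end

section
/- Row products of the column sums of SU(2) fusion matrices for A_r: with r ≥ 1, N = r+1, G the r×r adjacency matrix of the path graph, F_0 = 0, F_1 = I, F_{n+1} = F_n·G − F_{n−1}, and λ_{n,b} = ∑_{a=1}^{r} (F_n + F_{n−1})_{a,b}, one has for every n with 1 ≤ n and 2n ≤ N: ∏_{b=1}^{N−1} λ_{n,b} = 4^{n−1} · ((n−1)!)² · (2n−1)^{N−2n+1}. -/
open Finset

/-!
The column sums `λ_n = 1ᵀ (F_n + F_{n-1})` obey the fusion recurrence `λ_{n+1} = λ_n G - λ_{n-1}`,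
and right multiplication by `G` adds the two neighbouring entries of a row vector. Hence, as long as
`2n ≤ N`, induction gives the tent profile `λ_{n,b} = min(2b, 2(N - b), 2n - 1)`. Its product splits
into two ramps, each contributing `2^{n-1} (n-1)!`, and a plateau of `N - 2n + 1` entries `2n - 1`.
-/

open Matrix

lemma fusF_add_fusF_succ_succ (r m : ℕ) :
    fusF r (m + 3) + fusF r (m + 2)
      = (fusF r (m + 2) + fusF r (m + 1)) * pathG r - (fusF r (m + 1) + fusF r m) := by
  simp only [fusF, add_mul]
  abel

lemma sum_ite_intCast_eq {r : ℕ} (f : ℤ → ℤ) (hl : f (-1) = 0) (hr : f r = 0) (j : ℤ)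
    (hj : -1 ≤ j ∧ j ≤ r) :
    ∑ a : Fin r, (if (a : ℤ) = j then f a else 0) = f j := by
  rcases (show j = -1 ∨ j = r ∨ (0 ≤ j ∧ j < r) by omega) with rfl | rfl | ⟨hj0, hjr⟩
  · rw [hl]
    exact sum_eq_zero fun a _ => if_neg (by omega)
  · rw [hr]
    exact sum_eq_zero fun a _ => if_neg (by omega)
  · lift j to ℕ using hj0
    rw [Fintype.sum_eq_single ⟨j, by omega⟩ fun a ha => if_neg fun h => ha (Fin.ext (by simpa using h))]
    simp

lemma vecMul_pathG_apply {r : ℕ} (f : ℤ → ℤ) (hl : f (-1) = 0) (hr : f r = 0) (b : Fin r) :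
    ((fun a : Fin r => f a) ᵥ* pathG r) b = f (b - 1) + f (b + 1) := by
  have hterm : ∀ a : Fin r, f a * pathG r a b
      = (if (a : ℤ) = b - 1 then f a else 0) + (if (a : ℤ) = b + 1 then f a else 0) := by
    intro a
    simp only [pathG, of_apply]
    split_ifs <;> omega
  simp only [vecMul, dotProduct, hterm, sum_add_distrib]
  rw [sum_ite_intCast_eq f hl hr _ (by omega), sum_ite_intCast_eq f hl hr _ (by omega)]

/-- `λ_{m+1, k+1}` in the paper's notation: columns are indexed from `0` here. -/
def lamClosed (r m : ℕ) (k : ℤ) : ℤ := min (2 * (k + 1)) (min (2 * (r - k)) (2 * m + 1))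

lemma lamClosed_neg_one (r m : ℕ) : lamClosed r m (-1) = 0 := by
  simp only [lamClosed]
  omega

lemma lamClosed_self (r m : ℕ) : lamClosed r m r = 0 := by
  simp only [lamClosed]
  omega

lemma vecMul_pathG_lamClosed (r m : ℕ) (b : Fin r) :
    ((fun a : Fin r => lamClosed r m a) ᵥ* pathG r) b
      = lamClosed r m (b - 1) + lamClosed r m (b + 1) :=
  vecMul_pathG_apply _ (lamClosed_neg_one r m) (lamClosed_self r m) b

lemma colSum_fusF_add_fusF (r m : ℕ) (hm : 2 * m + 1 ≤ r) (b : Fin r) :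
    ((1 : Fin r → ℤ) ᵥ* (fusF r (m + 1) + fusF r m)) b = lamClosed r m b := by
  induction m using Nat.twoStepInduction generalizing b with
  | zero =>
    simp only [fusF, add_zero, vecMul_one, Pi.one_apply, lamClosed]
    omega
  | one =>
    have h0 : (1 : Fin r → ℤ) = fun a : Fin r => lamClosed r 0 a := by
      funext a
      simp only [Pi.one_apply, lamClosed]
      omega
    simp only [fusF, sub_zero, one_mul, vecMul_add, vecMul_one, Pi.add_apply]
    rw [h0, vecMul_pathG_lamClosed]
    simp only [lamClosed]
    omega
  | more m ih₀ ih₁ =>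
    have h₀ := ih₀ (by omega) b
    have h₁ : (1 : Fin r → ℤ) ᵥ* (fusF r (m + 2) + fusF r (m + 1))
        = fun a : Fin r => lamClosed r (m + 1) a := funext (ih₁ (by omega))
    rw [fusF_add_fusF_succ_succ, vecMul_sub, ← vecMul_vecMul, h₁, Pi.sub_apply, h₀,
      vecMul_pathG_lamClosed]
    simp only [lamClosed]
    omega

lemma prod_range_two_mul_succ (m : ℕ) :
    ∏ k ∈ range m, (2 * ((k : ℤ) + 1)) = 2 ^ m * (m.factorial : ℤ) := by
  rw [prod_mul_distrib, prod_const, card_range, ← prod_range_add_one_eq_factorial]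
  push_cast
  rfl

lemma prod_lamClosed (r m : ℕ) (hm : 2 * m ≤ r) :
    ∏ k ∈ range r, lamClosed r m k
      = 4 ^ m * (m.factorial : ℤ) ^ 2 * (2 * m + 1) ^ (r - 2 * m) := by
  obtain ⟨q, rfl⟩ := Nat.exists_eq_add_of_le hm
  have hleft : ∏ k ∈ range m, lamClosed (2 * m + q) m k = 2 ^ m * (m.factorial : ℤ) := by
    rw [← prod_range_two_mul_succ]
    refine prod_congr rfl fun k hk => ?_
    simp only [mem_range] at hk
    simp only [lamClosed]
    omega
  have hmid : ∏ k ∈ range q, lamClosed (2 * m + q) m ↑(m + k) = (2 * m + 1) ^ q := by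
    rw [prod_congr rfl fun k hk => ?_, prod_const, card_range]
    simp only [mem_range] at hk
    simp only [lamClosed]
    omega
  have hright : ∏ k ∈ range m, lamClosed (2 * m + q) m ↑(m + q + k)
      = 2 ^ m * (m.factorial : ℤ) := by
    rw [← prod_range_two_mul_succ, ← prod_range_reflect]
    refine prod_congr rfl fun k hk => ?_
    simp only [mem_range] at hk
    simp only [lamClosed]
    omega
  rw [show 2 * m + q = m + q + m by ring, prod_range_add, prod_range_add]
  rw [show m + q + m = 2 * m + q by ring, hleft, hmid, hright, Nat.add_sub_cancel_left,
    show (4 : ℤ) = 2 ^ 2 by norm_num, ← pow_mul]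
  ring

theorem fusion_rowProducts_Ar_general (r : ℕ) (n : ℕ) (hn : 1 ≤ n)
    (hn2 : 2 * n ≤ r + 1) :
    ∏ b : Fin r, (∑ a : Fin r, (fusF r n + fusF r (n - 1)) a b)
    = 4 ^ (n - 1) * ((Nat.factorial (n - 1) : ℤ)) ^ 2 *
        ((2 * n - 1 : ℕ) : ℤ) ^ ((r + 1) - 2 * n + 1) := by
  obtain ⟨m, rfl⟩ : ∃ m, n = m + 1 := ⟨n - 1, by omega⟩
  have hcol : ∀ b : Fin r, ∑ a : Fin r, (fusF r (m + 1) + fusF r m) a b = lamClosed r m b := by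
    intro b
    rw [← colSum_fusF_add_fusF r m (by omega) b]
    simp [vecMul, dotProduct]
  simp only [Nat.add_sub_cancel, hcol]
  rw [Fin.prod_univ_eq_prod_range (fun k : ℕ => lamClosed r m k), prod_lamClosed r m (by omega)]
  congr 2
  omega

/-- Row products of the column sums `λ_{n,b} = ∑_a (F_n + F_{n−1})_{a,b}` of
the `SU(2)` fusion matrices for `A_r`: with `N = r+1`, for `1 ≤ n`, `2n ≤ N`:
`∏_{b=1}^{N−1} λ_{n,b} = 4^{n−1} · ((n−1)!)² · (2n−1)^{N−2n+1}`. -/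
theorem fusion_rowProducts_Ar (r : ℕ) (hr : 1 ≤ r) (n : ℕ) (hn : 1 ≤ n)
    (hn2 : 2 * n ≤ r + 1) :
    ∏ b : Fin r, (∑ a : Fin r, (fusF r n + fusF r (n - 1)) a b)
    = 4 ^ (n - 1) * ((Nat.factorial (n - 1) : ℤ)) ^ 2 *
        ((2 * n - 1 : ℕ) : ℤ) ^ ((r + 1) - 2 * n + 1) :=
  fusion_rowProducts_Ar_general r n hn hn2
end

section
/- Odd-power product identity used in the evaluation of the A_r fusion product formula: for every integer s ≥ 1, ∏_{n=1}^{s} (2n−1)^{2s−2n+1} = sf(2s−1) / ( 2^{s(s−1)} · sf(s−1)² ), equivalently 2^{s(s−1)} · sf(s−1)² · ∏_{n=1}^{s} (2n−1)^{2s−2n+1} = sf(2s−1), where sf(m) = ∏_{j=1}^{m} j! (with sf(0) = 1). -/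
/-!
Write `F s = ∏_{n=1}^s (2n-1)^{2s-2n+1}`. Raising `s` by one adds two to every exponent and
appends the factor `2s+1`, so `F (s+1) = F s · ((2s-1)‼)² · (2s+1)`. On the other side
`sf (2s+1) = sf (2s-1) · ((2s)!)² · (2s+1)`, and `(2s)! = 2^s · s! · (2s-1)‼` splits off the
even factors. Both sides of the identity thus grow by the same factor, and it follows by
induction on `s`.
-/

open Finset
-- `Nat` is not opened: its scoped notation `sf n` for `Nat.superFactorial` would capture `sf`.

def sf (m : ℕ) : ℕ := ∏ j ∈ Finset.Icc 1 m, Nat.factorial j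

lemma sf_succ (m : ℕ) : sf (m + 1) = sf m * (m + 1).factorial :=
  prod_Icc_succ_top (by omega) _

lemma sf_add_two (m : ℕ) : sf (m + 2) = sf m * (m + 1).factorial ^ 2 * (m + 2) := by
  rw [sf_succ, sf_succ, Nat.factorial_succ (m + 1)]
  ring

lemma prod_Icc_two_mul_sub_one (s : ℕ) :
    ∏ n ∈ Icc 1 s, (2 * n - 1) = (2 * s - 1).doubleFactorial := by
  induction s with
  | zero => rfl
  | succ s ih =>
    rw [prod_Icc_succ_top (by omega), ih, show 2 * (s + 1) - 1 = 2 * s + 1 by omega,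
      Nat.doubleFactorial_add_one, mul_comm]

lemma factorial_two_mul_eq_two_pow_mul_factorial_mul_doubleFactorial (s : ℕ) :
    (2 * s).factorial = 2 ^ s * s.factorial * (2 * s - 1).doubleFactorial := by
  cases s with
  | zero => rfl
  | succ s =>
    rw [show 2 * (s + 1) = 2 * s + 1 + 1 by ring, Nat.factorial_eq_mul_doubleFactorial,
      show 2 * s + 1 + 1 = 2 * (s + 1) by ring, Nat.doubleFactorial_two_mul,
      show 2 * (s + 1) - 1 = 2 * s + 1 by omega]

lemma prod_odd_pow_succ (s : ℕ) :
    ∏ n ∈ Icc 1 (s + 1), (2 * n - 1) ^ (2 * (s + 1) - 2 * n + 1)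
      = (∏ n ∈ Icc 1 s, (2 * n - 1) ^ (2 * s - 2 * n + 1)) *
          (2 * s - 1).doubleFactorial ^ 2 * (2 * s + 1) := by
  have exponent_add_two : ∀ n ∈ Icc 1 s, (2 * n - 1) ^ (2 * (s + 1) - 2 * n + 1)
      = (2 * n - 1) ^ (2 * s - 2 * n + 1) * (2 * n - 1) ^ 2 := by
    intro n hn
    rw [← pow_add]
    congr 1
    grind
  rw [prod_Icc_succ_top (by omega), prod_congr rfl exponent_add_two, prod_mul_distrib, prod_pow,
    prod_Icc_two_mul_sub_one, show 2 * (s + 1) - 1 = 2 * s + 1 by omega, Nat.sub_self, pow_one]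

lemma two_pow_mul_sf_sq_mul_prod_odd_pow (k : ℕ) :
    2 ^ ((k + 1) * k) * sf k ^ 2 *
      ∏ n ∈ Icc 1 (k + 1), (2 * n - 1) ^ (2 * (k + 1) - 2 * n + 1)
    = sf (2 * k + 1) := by
  induction k with
  | zero => rfl
  | succ k ih =>
    rw [prod_odd_pow_succ, sf_succ, show 2 * (k + 1) + 1 = 2 * k + 1 + 2 by ring, sf_add_two,
      ← ih, show 2 * k + 1 + 1 = 2 * (k + 1) by ring,
      factorial_two_mul_eq_two_pow_mul_factorial_mul_doubleFactorial,
      show 2 * (k + 1) - 1 = 2 * k + 1 by omega,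
      show (k + 1 + 1) * (k + 1) = (k + 1) * k + 2 * (k + 1) by ring, pow_add, pow_mul]
    ring

theorem oddPower_product_superfactorial_general (s : ℕ) :
    2 ^ (s * (s - 1)) * sf (s - 1) ^ 2 *
      ∏ n ∈ Finset.Icc 1 s, (2 * n - 1) ^ (2 * s - 2 * n + 1)
    = sf (2 * s - 1) := by
  cases s with
  | zero => rfl
  | succ k =>
    rw [Nat.add_sub_cancel, show 2 * (k + 1) - 1 = 2 * k + 1 by omega]
    exact two_pow_mul_sf_sq_mul_prod_odd_pow k

/-- Odd-power product identity used in the evaluation of the `A_r` fusion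
product formula: for `s ≥ 1`,
`2^{s(s−1)} · sf(s−1)² · ∏_{n=1}^s (2n−1)^{2s−2n+1} = sf(2s−1)`. -/
theorem oddPower_product_superfactorial (s : ℕ) (hs : 1 ≤ s) :
    2 ^ (s * (s - 1)) * sf (s - 1) ^ 2 *
      ∏ n ∈ Finset.Icc 1 s, (2 * n - 1) ^ (2 * s - 2 * n + 1)
    = sf (2 * s - 1) :=
  oddPower_product_superfactorial_general s
end

section
/- Periodicity of SU(2) fusion matrices for A_r: let r ≥ 1, N = r+1, let G be the r×r adjacency matrix of the path graph on r vertices (G_{ab}=1 iff |a−b|=1), and define F_0 = 0, F_1 = I, F_{n+1} = F_n·G − F_{n−1}. Then F_N = 0; for all integers m with 0 ≤ m ≤ N, F_{N+m} = −F_{N−m}; and consequently F_{n+2N} = F_n for all n ≥ 0. -/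
open Finset

/-!
The `F_n` commute with `G` and with each other (they are Chebyshev polynomials in `G`), and the
recurrence moves the first basis vector along the path: `F_n e₀ = e_{n-1}` for `1 ≤ n ≤ r`, hence
`F_N e₀ = G e_{r-1} - e_{r-2} = 0`. Since `e₀` is cyclic, `F_{b+1} e₀ = e_b`, every column
`F_N e_b = F_{b+1} (F_N e₀)` vanishes too, so `F_N = 0`.

For any solution of `x_{n+2} = x_{n+1} g - x_n` in a ring, a zero is a centre of antisymmetry,
because the recurrence read backwards is the same recurrence; antisymmetry about both `0` and `N`
gives period `2N`.
-/

section Recurrence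

variable {R : Type*} [Ring R] {g : R} {s t : ℕ → R}

theorem eq_of_recurrence (hs : ∀ n, s (n + 2) = s (n + 1) * g - s n)
    (ht : ∀ n, t (n + 2) = t (n + 1) * g - t n) (h0 : s 0 = t 0) (h1 : s 1 = t 1) : s = t := by
  funext n
  induction n using Nat.twoStepInduction with
  | zero => exact h0
  | one => exact h1
  | more n ih₀ ih₁ => rw [hs, ht, ih₀, ih₁]

theorem commute_generator_of_recurrence (hs : ∀ n, s (n + 2) = s (n + 1) * g - s n)
    (h0 : s 0 = 0) (h1 : s 1 = 1) (n : ℕ) : Commute (s n) g := by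
  induction n using Nat.twoStepInduction with
  | zero => rw [h0]; exact Commute.zero_left g
  | one => rw [h1]; exact Commute.one_left g
  | more n ih₀ ih₁ => rw [hs]; exact (ih₁.mul_left (Commute.refl g)).sub_left ih₀

theorem commute_of_recurrence (hs : ∀ n, s (n + 2) = s (n + 1) * g - s n)
    (h0 : s 0 = 0) (h1 : s 1 = 1) (m n : ℕ) : Commute (s m) (s n) := by
  induction n using Nat.twoStepInduction with
  | zero => rw [h0]; exact Commute.zero_right _
  | one => rw [h1]; exact Commute.one_right _
  | more n ih₀ ih₁ =>
    rw [hs]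
    exact (ih₁.mul_right (commute_generator_of_recurrence hs h0 h1 m)).sub_right ih₀

theorem recurrence_add_eq_neg_sub (hs : ∀ n, s (n + 2) = s (n + 1) * g - s n) {N : ℕ}
    (hN : s N = 0) : ∀ m ≤ N, s (N + m) = -s (N - m) := by
  intro m
  induction m using Nat.strong_induction_on with
  | _ m ih =>
    match m with
    | 0 => intro _; simp [hN]
    | 1 =>
      intro hm
      obtain ⟨k, rfl⟩ : ∃ k, N = k + 1 := ⟨N - 1, by omega⟩
      rw [show k + 1 + 1 = k + 2 by rfl, hs, hN]
      simp
    | m + 2 =>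
      intro hm
      obtain ⟨k, rfl⟩ : ∃ k, N = k + m + 2 := ⟨N - m - 2, by omega⟩
      have backward := hs k
      rw [show k + m + 2 + (m + 2) = k + m + 2 + m + 2 by omega, hs,
        show k + m + 2 + m + 1 = k + m + 2 + (m + 1) by omega,
        ih (m + 1) (by omega) (by omega), ih m (by omega) (by omega),
        show k + m + 2 - (m + 1) = k + 1 by omega, show k + m + 2 - m = k + 2 by omega,
        show k + m + 2 - (m + 2) = k by omega, backward]
      noncomm_ring

theorem periodic_of_recurrence (hs : ∀ n, s (n + 2) = s (n + 1) * g - s n) {N : ℕ}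
    (h0 : s 0 = 0) (hN : s N = 0) : Function.Periodic s (2 * N) := by
  intro n
  obtain _ | N := N
  · rfl
  have hrefl := recurrence_add_eq_neg_sub hs hN
  have h2N : s (2 * (N + 1)) = 0 := by
    rw [two_mul, hrefl (N + 1) le_rfl, Nat.sub_self, h0, neg_zero]
  have h2N1 : s (1 + 2 * (N + 1)) = s 1 := by
    rw [show 1 + 2 * (N + 1) = (N + 1 + N) + 2 by omega, hs,
      show N + 1 + N + 1 = 2 * (N + 1) by omega, h2N, hrefl N (by omega),
      show N + 1 - N = 1 by omega]
    simp
  have hshift : ∀ n, s (n + 2 + 2 * (N + 1)) =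
      s (n + 1 + 2 * (N + 1)) * g - s (n + 2 * (N + 1)) := fun n => by
    rw [show n + 2 + 2 * (N + 1) = n + 2 * (N + 1) + 2 by omega, hs]
    ring_nf
  exact congrFun (eq_of_recurrence (s := fun n => s (n + 2 * (N + 1))) hshift hs
    (by rw [zero_add, h2N, h0]) h2N1) n

end Recurrence

open Matrix

theorem fusF_add_two (r n : ℕ) : fusF r (n + 2) = fusF r (n + 1) * pathG r - fusF r n := rfl

theorem fusF_mulVec_single_zero {r : ℕ} (hr : 0 < r) {n : ℕ} (hn : n ≤ r + 1) :
    fusF r n *ᵥ Pi.single ⟨0, hr⟩ 1 = fun i : Fin r => if (i : ℕ) + 1 = n then 1 else 0 := by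
  induction n using Nat.strong_induction_on with
  | _ n ih =>
    match n with
    | 0 => funext i; simp [fusF]
    | 1 => funext i; simp [fusF, Matrix.one_apply, Fin.ext_iff]
    | n + 2 =>
      have hcomm := commute_generator_of_recurrence (fusF_add_two r) rfl rfl (n + 1)
      have hprev : fusF r (n + 1) *ᵥ Pi.single ⟨0, hr⟩ 1 = Pi.single ⟨n, by omega⟩ 1 := by
        rw [ih (n + 1) (by omega) (by omega)]
        funext i; simp [Pi.single_apply, Fin.ext_iff]
      rw [fusF_add_two, hcomm.eq, sub_mulVec, ← mulVec_mulVec, hprev,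
        ih n (by omega) (by omega), mulVec_single_one]
      funext i
      simp only [pathG, col_apply, of_apply, Pi.sub_apply]
      split_ifs <;> omega

theorem fusF_coxeter_eq_zero (r : ℕ) : fusF r (r + 1) = 0 := by
  refine ext_of_mulVec_single fun b => ?_
  have hr : 0 < r := b.pos
  have hcyclic : fusF r (b + 1) *ᵥ Pi.single ⟨0, hr⟩ 1 = Pi.single b 1 := by
    rw [fusF_mulVec_single_zero hr (by omega)]
    funext i; simp [Pi.single_apply, Fin.ext_iff]
  have hfirst : fusF r (r + 1) *ᵥ Pi.single ⟨0, hr⟩ 1 = 0 := by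
    rw [fusF_mulVec_single_zero hr le_rfl]
    funext i; simp only [Pi.zero_apply, ite_eq_right_iff]; omega
  rw [← hcyclic, mulVec_mulVec, (commute_of_recurrence (fusF_add_two r) rfl rfl _ _).eq,
    ← mulVec_mulVec, hfirst, mulVec_zero, zero_mulVec]

theorem fusion_periodicity_Ar_general (r : ℕ) :
    fusF r (r + 1) = 0 ∧
    (∀ m : ℕ, m ≤ r + 1 → fusF r ((r + 1) + m) = -fusF r ((r + 1) - m)) ∧
    (∀ n : ℕ, fusF r (n + 2 * (r + 1)) = fusF r n) :=
  ⟨fusF_coxeter_eq_zero r,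
    recurrence_add_eq_neg_sub (fusF_add_two r) (fusF_coxeter_eq_zero r),
    periodic_of_recurrence (fusF_add_two r) rfl (fusF_coxeter_eq_zero r)⟩

/-- Periodicity of the `SU(2)` fusion matrices for `A_r`: with `N = r+1`,
`F_N = 0`; `F_{N+m} = −F_{N−m}` for `0 ≤ m ≤ N`; and `F_{n+2N} = F_n` for
all `n ≥ 0`. -/
theorem fusion_periodicity_Ar (r : ℕ) (hr : 1 ≤ r) :
    fusF r (r + 1) = 0 ∧
    (∀ m : ℕ, m ≤ r + 1 → fusF r ((r + 1) + m) = -fusF r ((r + 1) - m)) ∧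
    (∀ n : ℕ, fusF r (n + 2 * (r + 1)) = fusF r n) :=
  fusion_periodicity_Ar_general r
end

section
/- Verlinde formula for SU(2): let k ≥ 0, N = k+2, let G be the (k+1)×(k+1) adjacency matrix of the path graph on k+1 vertices, and define F_0 = 0, F_1 = I, F_{n+1} = F_n·G − F_{n−1}. Then for all integers n, a, b with 1 ≤ n, a, b ≤ N−1: (F_n)_{a,b} = (2/N) · ∑_{j=1}^{N−1} sin(πnj/N)·sin(πaj/N)·sin(πbj/N) / sin(πj/N). (Equivalently, (F_n)_{a,b} = ∑_j S_{n,j}S_{a,j}S_{b,j}/S_{1,j}, where S_{m,n} = √(2/N)·sin(πmn/N) is the modular S-matrix of A_k(SU(2)).) -/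
/-! For `1 ≤ j ≤ N - 1` the vector `v_j = (sin (π (c + 1) j / N))_c` is an eigenvector of the
path adjacency matrix with eigenvalue `2 cos (π j / N)`: the missing neighbour beyond the last
vertex contributes `sin (π j) = 0`. The Chebyshev recurrence then gives
`sin (π j / N) • F_n v_j = sin (π n j / N) • v_j`. The same sines are orthogonal in the other
index, `∑_j v_j(c) v_j(d) = (N / 2) δ_{cd}`, by the closed form of a sum of cosines; writing
`F_n = F_n · (2 / N) ∑_j v_j v_jᵀ` yields the formula. -/

open Real Finset

open Matrix

lemma sin_sub_add_sin_add (x y : ℝ) : sin (x - y) + sin (x + y) = 2 * cos y * sin x := by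
  rw [sin_sub, sin_add]; ring

lemma sum_range_ite_adjacent {M : Type*} [AddCommMonoid M] (r a : ℕ) (g : ℕ → M)
    (h0 : g 0 = 0) (hr : g (r + 1) = 0) (ha : a < r) :
    ∑ c ∈ range r, (if a + 1 = c ∨ c + 1 = a then g (c + 1) else 0) = g a + g (a + 2) := by
  have hsplit : ∀ c, (if a + 1 = c ∨ c + 1 = a then g (c + 1) else 0)
      = (if c + 1 = a then g (c + 1) else 0) + (if a + 1 = c then g (c + 1) else 0) := by
    intro c
    by_cases h : c + 1 = a
    · simp [← h, show c + 1 + 1 ≠ c by omega]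
    · simp [h]
  have hbelow : ∑ c ∈ range r, (if c + 1 = a then g (c + 1) else 0) = g a := by
    have := sum_range_succ' (fun c => if c = a then g c else 0) r
    simpa [h0, show a < r + 1 by omega] using this.symm
  have habove : ∑ c ∈ range r, (if a + 1 = c then g (c + 1) else 0) = g (a + 2) := by
    rw [sum_ite_eq]
    split_ifs with h
    · rfl
    · rw [show a + 2 = r + 1 by simp at h; omega, hr]
  rw [sum_congr rfl fun c _ => hsplit c, sum_add_distrib, hbelow, habove]

noncomputable def sineVec (r : ℕ) (θ : ℝ) : Fin r → ℝ := fun c => sin (((c : ℕ) + 1) * θ)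

lemma pathG_mulVec_sineVec (r : ℕ) (θ : ℝ) (hθ : sin ((r + 1) * θ) = 0) :
    (Int.castRingHom ℝ).mapMatrix (pathG r) *ᵥ sineVec r θ = (2 * cos θ) • sineVec r θ := by
  ext a
  calc ((Int.castRingHom ℝ).mapMatrix (pathG r) *ᵥ sineVec r θ) a
      = ∑ c : Fin r,
          if (a : ℕ) + 1 = c ∨ (c : ℕ) + 1 = a then sin (((c + 1 : ℕ) : ℝ) * θ) else 0 := by
        simp only [mulVec, dotProduct]
        refine sum_congr rfl fun c _ => ?_
        simp only [pathG, sineVec, RingHom.mapMatrix_apply, map_apply, of_apply]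
        split_ifs <;> simp
    _ = sin (((a : ℕ) : ℝ) * θ) + sin ((((a : ℕ) + 2 : ℕ) : ℝ) * θ) :=
        (Fin.sum_univ_eq_sum_range _ r).trans <|
          sum_range_ite_adjacent r a (fun m => sin (m * θ)) (by simp) (by simpa using hθ) a.isLt
    _ = ((2 * cos θ) • sineVec r θ) a := by
        rw [Pi.smul_apply, smul_eq_mul, sineVec, ← sin_sub_add_sin_add]
        congr 2 <;> push_cast <;> ring

lemma sin_smul_fusF_mulVec_sineVec (r n : ℕ) (θ : ℝ) (hθ : sin ((r + 1) * θ) = 0) :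
    sin θ • ((Int.castRingHom ℝ).mapMatrix (fusF r n) *ᵥ sineVec r θ)
      = sin (n * θ) • sineVec r θ := by
  induction n using fusF.induct with
  | case1 => simp [fusF]
  | case2 => simp [fusF]
  | case3 n ih₀ ih₁ =>
    have hrec : sin ((n + 2 : ℕ) * θ) = 2 * cos θ * sin ((n + 1 : ℕ) * θ) - sin (n * θ) := by
      rw [← sin_sub_add_sin_add]; push_cast; ring_nf
    rw [fusF, map_sub, map_mul, sub_mulVec, ← mulVec_mulVec, pathG_mulVec_sineVec r θ hθ,
      mulVec_smul, smul_sub, smul_comm, ih₁, ih₀, smul_smul, ← sub_smul, hrec]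

lemma sum_range_cos_int_mul (N : ℕ) (hN : N ≠ 0) (m : ℤ) (hm : ¬ (2 * N : ℤ) ∣ m) :
    ∑ j ∈ range N, cos (m * (π * j / N)) = sin (π * m / 2) ^ 2 := by
  have hN' : (N : ℝ) ≠ 0 := Nat.cast_ne_zero.2 hN
  set a := π * m / N with ha_def
  have hsin_half : sin (a / 2) ≠ 0 := by
    rw [Ne, sin_eq_zero_iff]
    rintro ⟨t, ht⟩
    refine hm ⟨t, ?_⟩
    have : (m : ℝ) = 2 * N * t := by
      rw [ha_def] at ht
      field_simp at ht
      linarith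
    exact_mod_cast this
  have hsincos : sin (π * m / 2) * cos (π * m / 2) = 0 := by
    have := sin_two_mul (π * m / 2)
    rw [show 2 * (π * m / 2) = m * π by ring, sin_int_mul_pi] at this
    linarith
  have key := sin_mul_sum_cos N a 0
  simp only [add_zero] at key
  apply mul_left_cancel₀ hsin_half
  rw [sum_congr rfl fun j _ => by rw [show (m : ℝ) * (π * j / N) = a * j by ring], key,
    show N * a / 2 = π * m / 2 by rw [ha_def]; field_simp,
    show (N - 1) * a / 2 = π * m / 2 - a / 2 by rw [ha_def]; field_simp, cos_sub]
  linear_combination cos (a / 2) * hsincos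

lemma sum_range_sin_mul_sin (N a b : ℕ) (ha : 0 < a) (haN : a < N) (hb : 0 < b) (hbN : b < N) :
    ∑ j ∈ range N, sin (a * (π * j / N)) * sin (b * (π * j / N))
      = if a = b then (N : ℝ) / 2 else 0 := by
  have hcos : ∀ m : ℤ, m ≠ 0 → |m| < 2 * N →
      ∑ j ∈ range N, cos (m * (π * j / N)) = sin (π * m / 2) ^ 2 := fun m hm hmN =>
    sum_range_cos_int_mul N (by omega) m fun hdvd => hm (Int.eq_zero_of_abs_lt_dvd hdvd hmN)
  have hprod : ∀ j : ℕ, sin (a * (π * j / N)) * sin (b * (π * j / N)) =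
      (cos (((a - b : ℤ) : ℝ) * (π * j / N)) - cos (((a + b : ℤ) : ℝ) * (π * j / N))) / 2 := by
    intro j
    push_cast
    rw [sub_mul, add_mul, cos_sub, cos_add]
    ring
  rw [sum_congr rfl fun j _ => hprod j, ← sum_div, sum_sub_distrib,
    hcos (a + b) (by omega) (by rw [abs_lt]; omega)]
  split_ifs with hab
  · subst hab
    have hsin : sin (π * ((a : ℝ) + a) / 2) = 0 := by
      rw [show π * ((a : ℝ) + a) / 2 = (a : ℤ) * π by push_cast; ring, sin_int_mul_pi]
    simp [hsin]
  · have hsq : sin (π * ((a + b : ℤ) : ℝ) / 2) ^ 2 = sin (π * ((a - b : ℤ) : ℝ) / 2) ^ 2 := by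
      push_cast
      rw [show π * (a + b) / 2 = π * (a - b) / 2 + b * π by ring, sin_add_nat_mul_pi, mul_pow,
        ← pow_mul, pow_mul', neg_one_sq, one_pow, one_mul]
    rw [hcos (a - b) (by omega) (by rw [abs_lt]; omega), hsq, sub_self, zero_div]

lemma sum_sineVec_mul_sineVec (k : ℕ) (c d : Fin (k + 1)) :
    ∑ j ∈ Icc 1 (k + 1), sineVec (k + 1) (π * j / (k + 2)) c * sineVec (k + 1) (π * j / (k + 2)) d
      = if c = d then ((k : ℝ) + 2) / 2 else 0 := by
  have horth := sum_range_sin_mul_sin (k + 2) (c + 1) (d + 1) (by omega) (by omega) (by omega)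
    (by omega)
  rw [range_eq_Ico, sum_eq_sum_Ico_succ_bot (by omega),
    show Ico (0 + 1) (k + 2) = Icc 1 (k + 1) from Ico_add_one_right_eq_Icc 1 (k + 1)] at horth
  simp only [Nat.cast_zero, mul_zero, zero_div, sin_zero, zero_add] at horth
  simp only [sineVec, Fin.ext_iff]
  push_cast at horth
  rw [← horth]

lemma fusF_mulVec_sineVec_apply (k n j : ℕ) (hj : j ∈ Icc 1 (k + 1)) (a : Fin (k + 1)) :
    ((Int.castRingHom ℝ).mapMatrix (fusF (k + 1) n) *ᵥ sineVec (k + 1) (π * j / (k + 2))) a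
      = sin (n * (π * j / (k + 2))) * sineVec (k + 1) (π * j / (k + 2)) a
          / sin (π * j / (k + 2)) := by
  rw [mem_Icc] at hj
  have hsin : sin (π * j / (k + 2)) ≠ 0 := by
    have hj₀ : (0 : ℝ) < j := by exact_mod_cast hj.1
    have hjk : (j : ℝ) < k + 2 := by exact_mod_cast (show j < k + 2 by omega)
    refine (sin_pos_of_pos_of_lt_pi (by positivity) ?_).ne'
    rw [div_lt_iff₀ (by positivity)]
    nlinarith [pi_pos]
  have hnode : sin (((k + 1 : ℕ) + 1 : ℝ) * (π * j / (k + 2))) = 0 := by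
    rw [show ((k + 1 : ℕ) + 1 : ℝ) * (π * j / (k + 2)) = (j : ℤ) * π by push_cast; field_simp; ring]
    exact sin_int_mul_pi j
  have heigen := congr_fun (sin_smul_fusF_mulVec_sineVec (k + 1) n _ hnode) a
  simp only [Pi.smul_apply, smul_eq_mul] at heigen
  rw [eq_div_iff hsin, mul_comm, heigen]

theorem verlinde_SU2_general (k : ℕ) (n : ℕ) (a b : Fin (k + 1)) :
    ((fusF (k + 1) n a b : ℤ) : ℝ)
    = (2 / ((k : ℝ) + 2)) * ∑ j ∈ Finset.Icc 1 (k + 1),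
        Real.sin (π * (n : ℝ) * (j : ℝ) / ((k : ℝ) + 2)) *
          Real.sin (π * ((a : ℕ) + 1 : ℝ) * (j : ℝ) / ((k : ℝ) + 2)) *
          Real.sin (π * ((b : ℕ) + 1 : ℝ) * (j : ℝ) / ((k : ℝ) + 2)) /
          Real.sin (π * (j : ℝ) / ((k : ℝ) + 2)) := by
  set M := (Int.castRingHom ℝ).mapMatrix (fusF (k + 1) n)
  set v : ℕ → Fin (k + 1) → ℝ := fun j => sineVec (k + 1) (π * j / (k + 2))
  calc ((fusF (k + 1) n a b : ℤ) : ℝ)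
      = ∑ c, M a c * (2 / (k + 2) * ∑ j ∈ Icc 1 (k + 1), v j c * v j b) := by
        simp only [v, sum_sineVec_mul_sineVec, mul_ite, mul_zero, sum_ite_eq', mem_univ, if_true]
        field_simp
        rfl
    _ = 2 / (k + 2) * ∑ j ∈ Icc 1 (k + 1), (M *ᵥ v j) a * v j b := by
        simp only [mulVec, dotProduct, mul_sum, sum_mul]
        rw [sum_comm]
        refine sum_congr rfl fun j _ => sum_congr rfl fun c _ => by ring
    _ = _ := by
        refine congr_arg _ (sum_congr rfl fun j hj => ?_)
        rw [fusF_mulVec_sineVec_apply k n j hj]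
        simp only [v, sineVec]
        ring_nf

/-- Verlinde formula for `SU(2)`: with `N = k+2`, for `1 ≤ n ≤ N−1` and
vertices `a b : Fin (k+1)` (with `1`-based labels `(a:ℕ)+1`, `(b:ℕ)+1`):
`(F_n)_{a,b} = (2/N)·∑_{j=1}^{N−1} sin(πnj/N)·sin(πaj/N)·sin(πbj/N)/sin(πj/N)`. -/
theorem verlinde_SU2 (k : ℕ) (n : ℕ) (hn1 : 1 ≤ n) (hn2 : n ≤ k + 1)
    (a b : Fin (k + 1)) :
    ((fusF (k + 1) n a b : ℤ) : ℝ)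
    = (2 / ((k : ℝ) + 2)) * ∑ j ∈ Finset.Icc 1 (k + 1),
        Real.sin (π * (n : ℝ) * (j : ℝ) / ((k : ℝ) + 2)) *
          Real.sin (π * ((a : ℕ) + 1 : ℝ) * (j : ℝ) / ((k : ℝ) + 2)) *
          Real.sin (π * ((b : ℕ) + 1 : ℝ) * (j : ℝ) / ((k : ℝ) + 2)) /
          Real.sin (π * (j : ℝ) / ((k : ℝ) + 2)) :=
  verlinde_SU2_general k n a b
end
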